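/- Let x0, x1, x2, x3 be vertices of M with x0 adjacent to x1, x1 adjacent to x2, x2 adjacent to x3, x0 ≠ x2 and x1 ≠ x3, and suppose that for some a, b ∈ {0, 1, 3} with a ≠ b the edges {x0, x1} and {x2, x3} both have label b while the edge {x1, x2} has label a. Then the number of pairs (y1, y2) with x0 adjacent to y1, y1 adjacent to y2, y2 adjacent to x3, x0 ≠ y2, y1 ≠ x3, and (y1, y2) ≠ (x1, x2), is equal to 2 if and only if a = 0. (That is, a root with consecutive labels b, a, b is of rank 2 precisely when its middle label is the label coming from a_0 = 0.) -/

import Mathlib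

/-
Every vertex of `MKGraph` lies on exactly one edge of each label, the one to `x ± (2a - 1)` with
the sign given by the parity of `x`. So a root with labels `b, a, b` is determined by its first
vertex, and the claim becomes a finite check over the 16 first vertices and the 6 pairs of
distinct labels `(a, b)`.
-/

/-- The Möbius–Kantor graph, realized as the graph on `ZMod 16` in which
distinct `x, y` are adjacent iff there are `a ∈ {0, 1, 3}` and `v : ZMod 16`
with `v.val` even such that `{x, y} = {v, v + (2a - 1)}`. -/
def MKGraph : SimpleGraph (ZMod 16) where
  Adj x y := x ≠ y ∧ ∃ a ∈ ({0, 1, 3} : Set ℕ), ∃ v : ZMod 16, Even v.val ∧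
    s(x, y) = s(v, v + (2 * (a : ZMod 16) - 1))
  symm := by
    constructor
    rintro x y ⟨hxy, a, ha, v, hv, h⟩
    exact ⟨hxy.symm, a, ha, v, hv, Sym2.eq_swap.trans h⟩
  loopless := by
    constructor
    rintro x ⟨hxx, -⟩
    exact hxx rfl

/-- An edge `{x, y}` of `MKGraph` has label `a ∈ {0, 1, 3}` if
`{x, y} = {v, v + (2a - 1)}` for some `v : ZMod 16` with `v.val` even. -/
def HasLabel (x y : ZMod 16) (a : ℕ) : Prop :=
  ∃ v : ZMod 16, Even v.val ∧ s(x, y) = s(v, v + (2 * (a : ZMod 16) - 1))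

namespace MKGraph

def step (a : ℕ) (x : ZMod 16) : ZMod 16 :=
  if Even x.val then x + (2 * a - 1) else x - (2 * a - 1)

theorem even_val_add_two_mul_sub_one_iff (x t : ZMod 16) :
    Even (x + (2 * t - 1)).val ↔ ¬ Even x.val := by
  revert x t; decide

theorem even_val_sub_two_mul_sub_one_iff (x t : ZMod 16) :
    Even (x - (2 * t - 1)).val ↔ ¬ Even x.val := by
  revert x t; decide

theorem step_ne (a : ℕ) (x : ZMod 16) : step a x ≠ x := by
  have key : ∀ x t : ZMod 16, x + (2 * t - 1) ≠ x ∧ x - (2 * t - 1) ≠ x := by decide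
  unfold step
  split_ifs
  exacts [(key x a).1, (key x a).2]

theorem hasLabel_iff (x y : ZMod 16) (a : ℕ) : HasLabel x y a ↔ y = step a x := by
  unfold HasLabel step
  constructor
  · rintro ⟨v, hv, hxy⟩
    rcases Sym2.eq_iff.1 hxy with ⟨rfl, rfl⟩ | ⟨rfl, rfl⟩
    · simp [hv]
    · simp [(even_val_add_two_mul_sub_one_iff _ _).not_left.2 hv]
  · rintro rfl
    split_ifs with hx
    · exact ⟨x, hx, rfl⟩
    · refine ⟨x - (2 * a - 1), (even_val_sub_two_mul_sub_one_iff _ _).2 hx, ?_⟩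
      rw [sub_add_cancel, Sym2.eq_swap]

theorem adj_iff (x y : ZMod 16) :
    MKGraph.Adj x y ↔ ∃ a ∈ ({0, 1, 3} : Finset ℕ), y = step a x := by
  change (x ≠ y ∧ ∃ a ∈ ({0, 1, 3} : Set ℕ), HasLabel x y a) ↔ _
  simp only [hasLabel_iff, Set.mem_insert_iff, Set.mem_singleton_iff, Finset.mem_insert,
    Finset.mem_singleton]
  exact and_iff_right_of_imp fun ⟨a, _, hy⟩ => hy ▸ (step_ne a x).symm

instance : DecidableRel MKGraph.Adj := fun _ _ => decidable_of_iff _ (adj_iff _ _).symm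

/-- The roots from `x0` to `x3` other than `(x0, x1, x2, x3)`, by their two inner vertices. -/
def otherRoots (x0 x1 x2 x3 : ZMod 16) : Finset (ZMod 16 × ZMod 16) :=
  Finset.univ.filter fun p => MKGraph.Adj x0 p.1 ∧ MKGraph.Adj p.1 p.2 ∧ MKGraph.Adj p.2 x3 ∧
    x0 ≠ p.2 ∧ p.1 ≠ x3 ∧ p ≠ (x1, x2)

theorem card_otherRoots_eq_two_iff : ∀ x0 : ZMod 16, ∀ a ∈ ({0, 1, 3} : Finset ℕ),
    ∀ b ∈ ({0, 1, 3} : Finset ℕ), a ≠ b →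
    ((otherRoots x0 (step b x0) (step a (step b x0)) (step b (step a (step b x0)))).card = 2 ↔
      a = 0) := by
  decide

end MKGraph

theorem stmt_15_general (x0 x1 x2 x3 : ZMod 16) (a b : ℕ)
    (haS : a ∈ ({0, 1, 3} : Set ℕ)) (hbS : b ∈ ({0, 1, 3} : Set ℕ)) (hab : a ≠ b)
    (hl01 : HasLabel x0 x1 b) (hl23 : HasLabel x2 x3 b) (hl12 : HasLabel x1 x2 a) :
    ({p : ZMod 16 × ZMod 16 |
        MKGraph.Adj x0 p.1 ∧ MKGraph.Adj p.1 p.2 ∧ MKGraph.Adj p.2 x3 ∧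
        x0 ≠ p.2 ∧ p.1 ≠ x3 ∧ p ≠ (x1, x2)}.ncard = 2) ↔ a = 0 := by
  rw [MKGraph.hasLabel_iff] at hl01 hl12 hl23
  subst hl01 hl12 hl23
  rw [Set.ncard_eq_toFinset_card', Set.toFinset_ofPred]
  exact MKGraph.card_otherRoots_eq_two_iff x0 a (by simpa using haS) b (by simpa using hbS) hab

/-- A root with consecutive labels `b, a, b` is of rank 2 precisely when its
middle label is the one coming from `a₀ = 0`. -/
theorem stmt_15 (x0 x1 x2 x3 : ZMod 16) (a b : ℕ)
    (haS : a ∈ ({0, 1, 3} : Set ℕ)) (hbS : b ∈ ({0, 1, 3} : Set ℕ)) (hab : a ≠ b)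
    (h01 : MKGraph.Adj x0 x1) (h12 : MKGraph.Adj x1 x2) (h23 : MKGraph.Adj x2 x3)
    (h02 : x0 ≠ x2) (h13 : x1 ≠ x3)
    (hl01 : HasLabel x0 x1 b) (hl23 : HasLabel x2 x3 b) (hl12 : HasLabel x1 x2 a) :
    ({p : ZMod 16 × ZMod 16 |
        MKGraph.Adj x0 p.1 ∧ MKGraph.Adj p.1 p.2 ∧ MKGraph.Adj p.2 x3 ∧
        x0 ≠ p.2 ∧ p.1 ≠ x3 ∧ p ≠ (x1, x2)}.ncard = 2) ↔ a = 0 :=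
  stmt_15_general x0 x1 x2 x3 a b haS hbS hab hl01 hl23 hl12
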